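/- (Theorem 2, part 1) In a finite two-player multistage game, for each player i and each k ∈ ℕ₀, Λᵏ_{θ_{ik}} ⊆ Σᵏ_{θ_{ik}}; consequently, Λ^∞_{θ_i} ⊆ Σ^∞_{θ_i} for every type θ_i: the DCH solution is contained in the set of dynamically Δ^κ-rationalizable type-strategy pairs. -/

import Mathlib

open scoped BigOperators
open Classical

noncomputable section

/-- A two-player multistage game: feasibility correspondences assigning to each history
(a finite sequence of action profiles, most recent first; `[]` is the root `∅`) the set
of feasible actions of each player. -/
structure MSGame (A B : Type*) where
  feas1 : List (A × B) → Finset A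
  feas2 : List (A × B) → Finset B

namespace MSGame

variable {A B : Type*}

/-- A history is terminal iff no player has a feasible action there. -/
def terminal (G : MSGame A B) (h : List (A × B)) : Prop :=
  G.feas1 h = ∅ ∧ G.feas2 h = ∅

/-- Feasible histories: the root is feasible, and a profile may be appended to a
feasible non-terminal history iff each component is feasible for its player. -/
def feasible (G : MSGame A B) : List (A × B) → Prop
  | [] => True
  | p :: h => feasible G h ∧ ¬G.terminal h ∧ p.1 ∈ G.feas1 h ∧ p.2 ∈ G.feas2 h

/-- Well-formedness: the "wait" convention (an inactive player has exactly her waiting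
move, so one feasibility set is empty iff the other is), finitely many feasible
histories, and a nontrivial root. -/
def WellFormed (G : MSGame A B) : Prop :=
  (∀ h : List (A × B), (G.feas1 h = ∅ ↔ G.feas2 h = ∅)) ∧
  {h : List (A × B) | G.feasible h}.Finite ∧ ¬G.terminal []

/-- The set `H` of non-terminal feasible histories, as a type. -/
def Hist (G : MSGame A B) : Type _ := {h : List (A × B) // G.feasible h ∧ ¬G.terminal h}

end MSGame

/-- A strategy of player 1: a feasible action at every non-terminal feasible history. -/
structure Strat1 {A B : Type*} (G : MSGame A B) where
  act : G.Hist → A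
  mem : ∀ h : G.Hist, act h ∈ G.feas1 h.1

/-- A strategy of player 2. -/
structure Strat2 {A B : Type*} (G : MSGame A B) where
  act : G.Hist → B
  mem : ∀ h : G.Hist, act h ∈ G.feas2 h.1

/-- `s ∈ S₁(h)`: player 1's strategy `s` is consistent with reaching history `h`
(it prescribes, at every proper prefix of `h`, the action played in `h`). -/
def consistent1 {A B : Type*} (G : MSGame A B) (s : Strat1 G) (h : List (A × B)) : Prop :=
  ∀ (h' : G.Hist) (p : A × B) (l : List (A × B)), h = l ++ p :: h'.1 → s.act h' = p.1

/-- `s ∈ S₂(h)`. -/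
def consistent2 {A B : Type*} (G : MSGame A B) (s : Strat2 G) (h : List (A × B)) : Prop :=
  ∀ (h' : G.Hist) (p : A × B) (l : List (A × B)), h = l ++ p :: h'.1 → s.act h' = p.2

/-- Fuelled play function. -/
def playAux {A B : Type*} (G : MSGame A B) (s1 : Strat1 G) (s2 : Strat2 G) :
    ℕ → List (A × B) → List (A × B)
  | 0, h => h
  | n + 1, h =>
      if hf : G.feasible h ∧ ¬G.terminal h then
        playAux G s1 s2 n ((s1.act ⟨h, hf⟩, s2.act ⟨h, hf⟩) :: h)
      else h

/-- The terminal history `ζ(s₁,s₂)` induced by a strategy profile (in a well-formed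
game the fuel suffices to reach a terminal history). -/
def play {A B : Type*} (G : MSGame A B) (s1 : Strat1 G) (s2 : Strat2 G) : List (A × B) :=
  playAux G s1 s2 ({h : List (A × B) | G.feasible h}.ncard + 1) []

/-- Player 1's payoff `U₁(θ, s)`: the level-0 type gets constant 0, other levels get
`v₁` at the induced terminal history. -/
def payU1 {A B : Type*} (G : MSGame A B) (v1 : List (A × B) → ℝ)
    (θ : ℕ) (s1 : Strat1 G) (s2 : Strat2 G) : ℝ :=
  if θ = 0 then 0 else v1 (play G s1 s2)

/-- Player 2's payoff `U₂(θ, s)`. -/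
def payU2 {A B : Type*} (G : MSGame A B) (v2 : List (A × B) → ℝ)
    (θ : ℕ) (s1 : Strat1 G) (s2 : Strat2 G) : ℝ :=
  if θ = 0 then 0 else v2 (play G s1 s2)

/-- A conditional probability system of player 1 over (opponent level, opponent
strategy) pairs: at each `h ∈ H` a probability distribution concentrated on
`Θ × S₂(h)`, satisfying the chain rule. -/
structure CPS2 {A B : Type*} (G : MSGame A B) where
  p : G.Hist → ℕ × Strat2 G → ℝ
  nonneg : ∀ h x, 0 ≤ p h x
  supp : ∀ h x, p h x ≠ 0 → consistent2 G x.2 h.1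
  hasSum_one : ∀ h, HasSum (p h) 1
  chain : ∀ h' h'' : G.Hist, h'.1 <:+ h''.1 → h'.1 ≠ h''.1 →
    ∀ x : ℕ × Strat2 G, consistent2 G x.2 h''.1 →
      p h' x = p h'' x * ∑' y : ℕ × Strat2 G, (if consistent2 G y.2 h''.1 then p h' y else 0)

/-- A conditional probability system of player 2. -/
structure CPS1 {A B : Type*} (G : MSGame A B) where
  p : G.Hist → ℕ × Strat1 G → ℝ
  nonneg : ∀ h x, 0 ≤ p h x
  supp : ∀ h x, p h x ≠ 0 → consistent1 G x.2 h.1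
  hasSum_one : ∀ h, HasSum (p h) 1
  chain : ∀ h' h'' : G.Hist, h'.1 <:+ h''.1 → h'.1 ≠ h''.1 →
    ∀ x : ℕ × Strat1 G, consistent1 G x.2 h''.1 →
      p h' x = p h'' x * ∑' y : ℕ × Strat1 G, (if consistent1 G y.2 h''.1 then p h' y else 0)

/-- Marginal probability of the opponent's level-`t` type at history `h` (player 1's CPS). -/
def margD2 {A B : Type*} {G : MSGame A B} (μ : CPS2 G) (h : G.Hist) (t : ℕ) : ℝ :=
  ∑' s : Strat2 G, μ.p h (t, s)

def margD1 {A B : Type*} {G : MSGame A B} (μ : CPS1 G) (h : G.Hist) (t : ℕ) : ℝ :=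
  ∑' s : Strat1 G, μ.p h (t, s)

/-- `f` normalized to the levels `0, …, k-1` (`f^k` in the paper). -/
def fnorm (f : ℕ → ℝ) (k t : ℕ) : ℝ := f t / ∑ ℓ ∈ Finset.range k, f ℓ

/-- DK1–DK3 (membership in the dynamic `Δ^{θ_{1k}}`); no restriction for `k = 0`. -/
def memDeltaD2 {A B : Type*} (G : MSGame A B) (f : ℕ → ℝ) (k : ℕ) (μ : CPS2 G) : Prop :=
  k ≠ 0 →
    ((∀ (h : G.Hist) (t : ℕ), k ≤ t → margD2 μ h t = 0) ∧
     (∀ h : G.Hist, 0 < margD2 μ h 0 →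
        ∀ s : Strat2 G, consistent2 G s h.1 →
          μ.p h (0, s) / margD2 μ h 0 =
            1 / (({s' : Strat2 G | consistent2 G s' h.1}).ncard : ℝ)) ∧
     (∀ hr : G.feasible [] ∧ ¬G.terminal [],
        ∀ t : ℕ, t < k → margD2 μ ⟨[], hr⟩ t = fnorm f k t))

def memDeltaD1 {A B : Type*} (G : MSGame A B) (f : ℕ → ℝ) (k : ℕ) (μ : CPS1 G) : Prop :=
  k ≠ 0 →
    ((∀ (h : G.Hist) (t : ℕ), k ≤ t → margD1 μ h t = 0) ∧
     (∀ h : G.Hist, 0 < margD1 μ h 0 →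
        ∀ s : Strat1 G, consistent1 G s h.1 →
          μ.p h (0, s) / margD1 μ h 0 =
            1 / (({s' : Strat1 G | consistent1 G s' h.1}).ncard : ℝ)) ∧
     (∀ hr : G.feasible [] ∧ ¬G.terminal [],
        ∀ t : ℕ, t < k → margD1 μ ⟨[], hr⟩ t = fnorm f k t))

/-- Player 1's conditional expected payoff at `h` from strategy `s1`, own level `θ`. -/
def expU1 {A B : Type*} (G : MSGame A B) (v1 : List (A × B) → ℝ)
    (θ : ℕ) (μ : CPS2 G) (h : G.Hist) (s1 : Strat1 G) : ℝ :=
  ∑' x : ℕ × Strat2 G, μ.p h x * payU1 G v1 θ s1 x.2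

def expU2 {A B : Type*} (G : MSGame A B) (v2 : List (A × B) → ℝ)
    (θ : ℕ) (μ : CPS1 G) (h : G.Hist) (s2 : Strat2 G) : ℝ :=
  ∑' x : ℕ × Strat1 G, μ.p h x * payU2 G v2 θ x.2 s2

/-- Sequential rationality of `s1` for the level-`θ` type of player 1 w.r.t. CPS `μ`. -/
def seqRat1 {A B : Type*} (G : MSGame A B) (v1 : List (A × B) → ℝ)
    (θ : ℕ) (μ : CPS2 G) (s1 : Strat1 G) : Prop :=
  ∀ h : G.Hist, consistent1 G s1 h.1 →
    ∀ s1' : Strat1 G, consistent1 G s1' h.1 →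
      expU1 G v1 θ μ h s1' ≤ expU1 G v1 θ μ h s1

def seqRat2 {A B : Type*} (G : MSGame A B) (v2 : List (A × B) → ℝ)
    (θ : ℕ) (μ : CPS1 G) (s2 : Strat2 G) : Prop :=
  ∀ h : G.Hist, consistent2 G s2 h.1 →
    ∀ s2' : Strat2 G, consistent2 G s2' h.1 →
      expU2 G v2 θ μ h s2' ≤ expU2 G v2 θ μ h s2

/-- The dynamic Δ^κ-rationalization procedure (pairs of surviving
(level, strategy) sets for the two players). -/
def SigmaD {A B : Type*} (G : MSGame A B) (v1 v2 : List (A × B) → ℝ) (f : ℕ → ℝ) :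
    ℕ → Set (ℕ × Strat1 G) × Set (ℕ × Strat2 G)
  | 0 => (Set.univ, Set.univ)
  | n + 1 =>
      let P := SigmaD G v1 v2 f n
      ({x | x ∈ P.1 ∧ ∃ μ : CPS2 G, memDeltaD2 G f x.1 μ ∧
          (∀ h : G.Hist, (∃ y : ℕ × Strat2 G, y ∈ P.2 ∧ consistent2 G y.2 h.1) →
            ∑' y : ℕ × Strat2 G, Set.indicator P.2 (μ.p h) y = 1) ∧
          seqRat1 G v1 x.1 μ x.2},
       {x | x ∈ P.2 ∧ ∃ μ : CPS1 G, memDeltaD1 G f x.1 μ ∧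
          (∀ h : G.Hist, (∃ y : ℕ × Strat1 G, y ∈ P.1 ∧ consistent1 G y.2 h.1) →
            ∑' y : ℕ × Strat1 G, Set.indicator P.1 (μ.p h) y = 1) ∧
          seqRat2 G v2 x.1 μ x.2})

/-- The section `Σⁿ_{θ_{1k}}` (a set of strategies of player 1). -/
def SigmaDSec1 {A B : Type*} (G : MSGame A B) (v1 v2 : List (A × B) → ℝ) (f : ℕ → ℝ)
    (n k : ℕ) : Set (Strat1 G) :=
  {s | (k, s) ∈ (SigmaD G v1 v2 f n).1}

def SigmaDSec2 {A B : Type*} (G : MSGame A B) (v1 v2 : List (A × B) → ℝ) (f : ℕ → ℝ)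
    (n k : ℕ) : Set (Strat2 G) :=
  {s | (k, s) ∈ (SigmaD G v1 v2 f n).2}

/-- The DCH-procedure: step `n` returns, for each player and each level `k`, the set of
surviving strategies `Λⁿ_{θ_{ik}}`. -/
def LambdaD {A B : Type*} (G : MSGame A B) (v1 v2 : List (A × B) → ℝ) (f : ℕ → ℝ) :
    ℕ → (ℕ → Set (Strat1 G)) × (ℕ → Set (Strat2 G))
  | 0 => (fun _ => Set.univ, fun _ => Set.univ)
  | n + 1 =>
      let P := LambdaD G v1 v2 f n
      (fun k =>
        if k = n + 1 then
          {s | ∃ μ : CPS2 G, memDeltaD2 G f (n + 1) μ ∧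
            (∀ hr : G.feasible [] ∧ ¬G.terminal [],
              (∀ x : ℕ × Strat2 G, μ.p ⟨[], hr⟩ x ≠ 0 ↔ x.1 ≤ n ∧ x.2 ∈ P.2 x.1) ∧
              (∀ t : ℕ, t ≤ n → ∀ s2 s2' : Strat2 G, s2 ∈ P.2 t → s2' ∈ P.2 t →
                μ.p ⟨[], hr⟩ (t, s2) = μ.p ⟨[], hr⟩ (t, s2'))) ∧
            seqRat1 G v1 (n + 1) μ s}
        else P.1 k,
       fun k =>
        if k = n + 1 then
          {s | ∃ μ : CPS1 G, memDeltaD1 G f (n + 1) μ ∧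
            (∀ hr : G.feasible [] ∧ ¬G.terminal [],
              (∀ x : ℕ × Strat1 G, μ.p ⟨[], hr⟩ x ≠ 0 ↔ x.1 ≤ n ∧ x.2 ∈ P.1 x.1) ∧
              (∀ t : ℕ, t ≤ n → ∀ s1 s1' : Strat1 G, s1 ∈ P.1 t → s1' ∈ P.1 t →
                μ.p ⟨[], hr⟩ (t, s1) = μ.p ⟨[], hr⟩ (t, s1'))) ∧
            seqRat2 G v2 (n + 1) μ s}
        else P.2 k)

/-- `Λⁿ_{θ_{1k}}`. -/
def LambdaDSec1 {A B : Type*} (G : MSGame A B) (v1 v2 : List (A × B) → ℝ) (f : ℕ → ℝ)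
    (n k : ℕ) : Set (Strat1 G) :=
  (LambdaD G v1 v2 f n).1 k

/-- `Λⁿ_{θ_{2k}}`. -/
def LambdaDSec2 {A B : Type*} (G : MSGame A B) (v1 v2 : List (A × B) → ℝ) (f : ℕ → ℝ)
    (n k : ℕ) : Set (Strat2 G) :=
  (LambdaD G v1 v2 f n).2 k

end

/-! Level-0 types are indifferent, so they are rationalized by the uniform CPS on level-0
opponents, which lies in `Σᵐ` because `Λ⁰_{θ₀}` contains every strategy. A level-`(n+1)` type is
rationalized by its own DCH belief `μ`: its root support is `⋃_{t ≤ n} Λᵗ_{θₜ} ⊆ Σᵐ` by induction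
on `m`, and since it charges every level-0 strategy, each history has positive root probability,
so the chain rule confines the support of `μ(·|h)` to the root support. -/

open Function

section LevelZero

variable {S : Type*}

noncomputable def uniformLevelZero (c : S → Prop) (x : ℕ × S) : ℝ :=
  if x.1 = 0 ∧ c x.2 then ({s | c s}.ncard : ℝ)⁻¹ else 0

theorem uniformLevelZero_nonneg (c : S → Prop) (x : ℕ × S) : 0 ≤ uniformLevelZero c x := by
  unfold uniformLevelZero
  split_ifs <;> positivity

theorem uniformLevelZero_ne_zero {c : S → Prop} {x : ℕ × S} (hx : uniformLevelZero c x ≠ 0) :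
    x.1 = 0 ∧ c x.2 := by
  by_contra h
  exact hx (if_neg h)

theorem hasSum_ite_levelZero [Finite S] (c : S → Prop) (r : ℝ) :
    HasSum (fun x : ℕ × S => if x.1 = 0 ∧ c x.2 then r else 0) ({s | c s}.ncard * r) := by
  cases nonempty_fintype S
  refine ((Prod.mk_right_injective 0).hasSum_iff ?_).1 ?_
  · rintro ⟨n, s⟩ hx
    rw [if_neg]
    rintro ⟨rfl, -⟩
    exact hx ⟨s, rfl⟩
  · convert hasSum_fintype (fun s : S => if c s then r else 0) using 1
    · ext s
      simp
    · simp [Finset.sum_ite, Set.ncard_eq_toFinset_card']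

theorem ncard_setOf_ne_zero [Finite S] {c : S → Prop} {s : S} (hs : c s) :
    ({s | c s}.ncard : ℝ) ≠ 0 :=
  Nat.cast_ne_zero.2 (Set.ncard_pos (Set.toFinite _) |>.2 ⟨s, hs⟩).ne'

theorem hasSum_uniformLevelZero [Finite S] {c : S → Prop} {s : S} (hs : c s) :
    HasSum (uniformLevelZero c) 1 := by
  have h := hasSum_ite_levelZero c ({s | c s}.ncard : ℝ)⁻¹
  rwa [mul_inv_cancel₀ (ncard_setOf_ne_zero hs)] at h

theorem uniformLevelZero_chain [Finite S] {c' c'' : S → Prop} (hc : ∀ s, c'' s → c' s)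
    {x : ℕ × S} (hx : c'' x.2) :
    uniformLevelZero c' x =
      uniformLevelZero c'' x * ∑' y : ℕ × S, if c'' y.2 then uniformLevelZero c' y else 0 := by
  have hrestrict : (fun y : ℕ × S => if c'' y.2 then uniformLevelZero c' y else 0) =
      fun y => if y.1 = 0 ∧ c'' y.2 then ({s | c' s}.ncard : ℝ)⁻¹ else 0 := by
    ext y
    by_cases hy : c'' y.2 <;> simp [uniformLevelZero, hy, hc _]
  rw [hrestrict, (hasSum_ite_levelZero c'' _).tsum_eq]
  unfold uniformLevelZero
  by_cases hx0 : x.1 = 0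
  · simp only [hx0, hx, hc _ hx, true_and, if_true]
    field_simp [ncard_setOf_ne_zero hx]
  · simp [hx0]

end LevelZero

theorem ne_zero_of_chain_rule {X : Type*} {p₀ p : X → ℝ} {c : X → Prop}
    (hp₀ : ∀ x, 0 ≤ p₀ x) (hsum : Summable p₀)
    (hchain : ∀ x, c x → p₀ x = p x * ∑' y, if c y then p₀ y else 0)
    {x₀ : X} (hcx₀ : c x₀) (hx₀ : p₀ x₀ ≠ 0) {x : X} (hcx : c x) (hx : p x ≠ 0) :
    p₀ x ≠ 0 := by
  have hmass : 0 < ∑' y, if c y then p₀ y else 0 := by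
    refine (hsum.indicator {y | c y}).tsum_pos (fun y => ?_) x₀ ?_
    · exact Set.indicator_nonneg (fun y _ => hp₀ y) y
    · simpa [hcx₀] using (hp₀ x₀).lt_of_ne' hx₀
  rw [hchain x hcx]
  exact mul_ne_zero hx hmass.ne'

section Game

variable {A B : Type*} (G : MSGame A B)

theorem MSGame.feasible_of_suffix {h h' : List (A × B)} (hs : h' <:+ h) (hf : G.feasible h) :
    G.feasible h' := by
  obtain ⟨l, rfl⟩ := hs
  induction l with
  | nil => exact hf
  | cons p l ih => exact ih hf.1

theorem MSGame.exists_feasible_profile (hG : G.WellFormed) (h : G.Hist) :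
    ∃ p : A × B, p.1 ∈ G.feas1 h.1 ∧ p.2 ∈ G.feas2 h.1 := by
  obtain ⟨a, ha⟩ := Finset.nonempty_iff_ne_empty.2 fun he => h.2.2 ⟨he, (hG.1 h.1).1 he⟩
  obtain ⟨b, hb⟩ := Finset.nonempty_iff_ne_empty.2 fun he => h.2.2 ⟨(hG.1 h.1).2 he, he⟩
  exact ⟨(a, b), ha, hb⟩

theorem MSGame.exists_profile_along (hG : G.WellFormed) {h : List (A × B)}
    (hf : G.feasible h) :
    ∃ σ : G.Hist → A × B, (∀ h', (σ h').1 ∈ G.feas1 h'.1 ∧ (σ h').2 ∈ G.feas2 h'.1) ∧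
      ∀ h' p l, h = l ++ p :: h'.1 → σ h' = p := by
  choose σ₀ hσ₀ using G.exists_feasible_profile hG
  refine ⟨fun h' => if hx : ∃ p l, h = l ++ p :: h'.1 then hx.choose else σ₀ h',
    fun h' => ?_, fun h' p l e => ?_⟩ <;> dsimp only
  · split_ifs with hx
    · obtain ⟨l, hl⟩ := hx.choose_spec
      exact (G.feasible_of_suffix ⟨l, hl.symm⟩ hf).2.2
    · exact hσ₀ h'
  · have hx : ∃ p l, h = l ++ p :: h'.1 := ⟨p, l, e⟩
    rw [dif_pos hx]
    obtain ⟨l', hl'⟩ := hx.choose_spec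
    simpa using (List.append_inj' (hl'.symm.trans e) rfl).2

theorem exists_consistent1 (hG : G.WellFormed) {h : List (A × B)} (hf : G.feasible h) :
    ∃ s : Strat1 G, consistent1 G s h :=
  let ⟨σ, hσ, hσh⟩ := G.exists_profile_along hG hf
  ⟨⟨fun h' => (σ h').1, fun h' => (hσ h').1⟩, fun h' p l e => by simp [hσh h' p l e]⟩

theorem exists_consistent2 (hG : G.WellFormed) {h : List (A × B)} (hf : G.feasible h) :
    ∃ s : Strat2 G, consistent2 G s h :=
  let ⟨σ, hσ, hσh⟩ := G.exists_profile_along hG hf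
  ⟨⟨fun h' => (σ h').2, fun h' => (hσ h').2⟩, fun h' p l e => by simp [hσh h' p l e]⟩

theorem consistent1_of_suffix {s : Strat1 G} {h' h'' : List (A × B)} (hs : h' <:+ h'')
    (hc : consistent1 G s h'') : consistent1 G s h' := by
  obtain ⟨l₀, rfl⟩ := hs
  exact fun k p l e => hc k p (l₀ ++ l) (by rw [e, List.append_assoc])

theorem consistent2_of_suffix {s : Strat2 G} {h' h'' : List (A × B)} (hs : h' <:+ h'')
    (hc : consistent2 G s h'') : consistent2 G s h' := by
  obtain ⟨l₀, rfl⟩ := hs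
  exact fun k p l e => hc k p (l₀ ++ l) (by rw [e, List.append_assoc])

theorem MSGame.finite_hist (hG : G.WellFormed) : Finite G.Hist :=
  (hG.2.1.subset fun _ hh => hh.1).to_subtype

theorem finite_strat1 (hG : G.WellFormed) : Finite (Strat1 G) := by
  have := G.finite_hist hG
  refine Finite.of_injective (fun s : Strat1 G => fun h => (⟨s.act h, s.mem h⟩ : G.feas1 h.1)) ?_
  rintro ⟨a, _⟩ ⟨b, _⟩ hab
  obtain rfl : a = b := funext fun h => congrArg Subtype.val (congrFun hab h)
  rfl

theorem finite_strat2 (hG : G.WellFormed) : Finite (Strat2 G) := by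
  have := G.finite_hist hG
  refine Finite.of_injective (fun s : Strat2 G => fun h => (⟨s.act h, s.mem h⟩ : G.feas2 h.1)) ?_
  rintro ⟨a, _⟩ ⟨b, _⟩ hab
  obtain rfl : a = b := funext fun h => congrArg Subtype.val (congrFun hab h)
  rfl

theorem seqRat1_zero (v1 : List (A × B) → ℝ) (μ : CPS2 G) (s : Strat1 G) :
    seqRat1 G v1 0 μ s := by
  intro _ _ _ _
  simp [expU1, payU1]

theorem seqRat2_zero (v2 : List (A × B) → ℝ) (μ : CPS1 G) (s : Strat2 G) :
    seqRat2 G v2 0 μ s := by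
  intro _ _ _ _
  simp [expU2, payU2]

end Game

section CPS

variable {A B : Type*} (G : MSGame A B)

noncomputable def CPS2.uniform (hG : G.WellFormed) : CPS2 G where
  p h := uniformLevelZero (consistent2 G · h.1)
  nonneg _ := uniformLevelZero_nonneg _
  supp _ _ hx := (uniformLevelZero_ne_zero hx).2
  hasSum_one h :=
    have := finite_strat2 G hG
    hasSum_uniformLevelZero (exists_consistent2 G hG h.2.1).choose_spec
  chain _ _ hs _ _ hx :=
    have := finite_strat2 G hG
    uniformLevelZero_chain (fun _ => consistent2_of_suffix G hs) hx

noncomputable def CPS1.uniform (hG : G.WellFormed) : CPS1 G where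
  p h := uniformLevelZero (consistent1 G · h.1)
  nonneg _ := uniformLevelZero_nonneg _
  supp _ _ hx := (uniformLevelZero_ne_zero hx).2
  hasSum_one h :=
    have := finite_strat1 G hG
    hasSum_uniformLevelZero (exists_consistent1 G hG h.2.1).choose_spec
  chain _ _ hs _ _ hx :=
    have := finite_strat1 G hG
    uniformLevelZero_chain (fun _ => consistent1_of_suffix G hs) hx

variable {G}

theorem CPS2.support_subset_of_root (μ : CPS2 G) (hr : G.feasible [] ∧ ¬G.terminal [])
    {T : Set (ℕ × Strat2 G)} (hT : support (μ.p ⟨[], hr⟩) ⊆ T)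
    (hreach : ∀ h : G.Hist, ∃ x, consistent2 G x.2 h.1 ∧ μ.p ⟨[], hr⟩ x ≠ 0) (h : G.Hist) :
    support (μ.p h) ⊆ T := by
  intro x hx
  by_cases hnil : h.1 = []
  · obtain rfl : h = ⟨[], hr⟩ := Subtype.ext hnil
    exact hT hx
  obtain ⟨x₀, hcx₀, hx₀⟩ := hreach h
  exact hT <| ne_zero_of_chain_rule (μ.nonneg _) (μ.hasSum_one _).summable
    (μ.chain _ h List.nil_suffix (Ne.symm hnil)) hcx₀ hx₀ (μ.supp h x hx) hx

theorem CPS1.support_subset_of_root (μ : CPS1 G) (hr : G.feasible [] ∧ ¬G.terminal [])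
    {T : Set (ℕ × Strat1 G)} (hT : support (μ.p ⟨[], hr⟩) ⊆ T)
    (hreach : ∀ h : G.Hist, ∃ x, consistent1 G x.2 h.1 ∧ μ.p ⟨[], hr⟩ x ≠ 0) (h : G.Hist) :
    support (μ.p h) ⊆ T := by
  intro x hx
  by_cases hnil : h.1 = []
  · obtain rfl : h = ⟨[], hr⟩ := Subtype.ext hnil
    exact hT hx
  obtain ⟨x₀, hcx₀, hx₀⟩ := hreach h
  exact hT <| ne_zero_of_chain_rule (μ.nonneg _) (μ.hasSum_one _).summable
    (μ.chain _ h List.nil_suffix (Ne.symm hnil)) hcx₀ hx₀ (μ.supp h x hx) hx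

end CPS

section Procedures

variable {A B : Type*} {G : MSGame A B} {v1 v2 : List (A × B) → ℝ} {f : ℕ → ℝ}

theorem lambdaDSec1_eq_of_le {k n : ℕ} (hkn : k ≤ n) :
    LambdaDSec1 G v1 v2 f n k = LambdaDSec1 G v1 v2 f k k := by
  induction n, hkn using Nat.le_induction with
  | base => rfl
  | succ m _ ih =>
    rw [← ih]
    exact if_neg (by omega)

theorem lambdaDSec2_eq_of_le {k n : ℕ} (hkn : k ≤ n) :
    LambdaDSec2 G v1 v2 f n k = LambdaDSec2 G v1 v2 f k k := by
  induction n, hkn using Nat.le_induction with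
  | base => rfl
  | succ m _ ih =>
    rw [← ih]
    exact if_neg (by omega)

theorem lambdaDSec1_zero (n : ℕ) : LambdaDSec1 G v1 v2 f n 0 = Set.univ :=
  lambdaDSec1_eq_of_le n.zero_le

theorem lambdaDSec2_zero (n : ℕ) : LambdaDSec2 G v1 v2 f n 0 = Set.univ :=
  lambdaDSec2_eq_of_le n.zero_le

theorem exists_cps2_of_mem_lambdaDSec1 (hG : G.WellFormed) {m k : ℕ} {s : Strat1 G}
    (hsigma : ∀ t, LambdaDSec2 G v1 v2 f t t ⊆ SigmaDSec2 G v1 v2 f m t)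
    (hs : s ∈ LambdaDSec1 G v1 v2 f k k) :
    ∃ μ : CPS2 G, memDeltaD2 G f k μ ∧
      (∀ h, support (μ.p h) ⊆ (SigmaD G v1 v2 f m).2) ∧ seqRat1 G v1 k μ s := by
  cases k with
  | zero =>
    refine ⟨CPS2.uniform G hG, fun h0 => (h0 rfl).elim, fun h x hx => ?_, seqRat1_zero G v1 _ s⟩
    obtain ⟨t, s'⟩ := x
    obtain ⟨rfl, -⟩ := uniformLevelZero_ne_zero (c := (consistent2 G · h.1)) hx
    exact hsigma 0 (Set.mem_univ s')
  | succ n =>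
    have hr : G.feasible [] ∧ ¬G.terminal [] := ⟨trivial, hG.2.2⟩
    simp only [LambdaDSec1, LambdaD, ↓reduceIte] at hs
    obtain ⟨μ, hΔ, hroot, hrat⟩ := hs
    have hroot_sigma : support (μ.p ⟨[], hr⟩) ⊆ (SigmaD G v1 v2 f m).2 := by
      rintro ⟨t, s'⟩ hx
      obtain ⟨ht, hs'⟩ := ((hroot hr).1 _).1 hx
      exact hsigma t (lambdaDSec2_eq_of_le (G := G) ht ▸ hs')
    refine ⟨μ, hΔ, μ.support_subset_of_root hr hroot_sigma fun h => ?_, hrat⟩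
    obtain ⟨s₀, hs₀⟩ := exists_consistent2 G hG h.2.1
    have hs₀_lambda : s₀ ∈ LambdaDSec2 G v1 v2 f n 0 := by
      rw [lambdaDSec2_zero]
      exact Set.mem_univ s₀
    exact ⟨(0, s₀), hs₀, ((hroot hr).1 _).2 ⟨n.zero_le, hs₀_lambda⟩⟩

theorem exists_cps1_of_mem_lambdaDSec2 (hG : G.WellFormed) {m k : ℕ} {s : Strat2 G}
    (hsigma : ∀ t, LambdaDSec1 G v1 v2 f t t ⊆ SigmaDSec1 G v1 v2 f m t)
    (hs : s ∈ LambdaDSec2 G v1 v2 f k k) :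
    ∃ μ : CPS1 G, memDeltaD1 G f k μ ∧
      (∀ h, support (μ.p h) ⊆ (SigmaD G v1 v2 f m).1) ∧ seqRat2 G v2 k μ s := by
  cases k with
  | zero =>
    refine ⟨CPS1.uniform G hG, fun h0 => (h0 rfl).elim, fun h x hx => ?_, seqRat2_zero G v2 _ s⟩
    obtain ⟨t, s'⟩ := x
    obtain ⟨rfl, -⟩ := uniformLevelZero_ne_zero (c := (consistent1 G · h.1)) hx
    exact hsigma 0 (Set.mem_univ s')
  | succ n =>
    have hr : G.feasible [] ∧ ¬G.terminal [] := ⟨trivial, hG.2.2⟩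
    simp only [LambdaDSec2, LambdaD, ↓reduceIte] at hs
    obtain ⟨μ, hΔ, hroot, hrat⟩ := hs
    have hroot_sigma : support (μ.p ⟨[], hr⟩) ⊆ (SigmaD G v1 v2 f m).1 := by
      rintro ⟨t, s'⟩ hx
      obtain ⟨ht, hs'⟩ := ((hroot hr).1 _).1 hx
      exact hsigma t (lambdaDSec1_eq_of_le (G := G) ht ▸ hs')
    refine ⟨μ, hΔ, μ.support_subset_of_root hr hroot_sigma fun h => ?_, hrat⟩
    obtain ⟨s₀, hs₀⟩ := exists_consistent1 G hG h.2.1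
    have hs₀_lambda : s₀ ∈ LambdaDSec1 G v1 v2 f n 0 := by
      rw [lambdaDSec1_zero]
      exact Set.mem_univ s₀
    exact ⟨(0, s₀), hs₀, ((hroot hr).1 _).2 ⟨n.zero_le, hs₀_lambda⟩⟩

theorem lambdaDSec_diag_subset_sigmaDSec (hG : G.WellFormed) (m : ℕ) :
    (∀ k, LambdaDSec1 G v1 v2 f k k ⊆ SigmaDSec1 G v1 v2 f m k) ∧
      ∀ k, LambdaDSec2 G v1 v2 f k k ⊆ SigmaDSec2 G v1 v2 f m k := by
  induction m with
  | zero => exact ⟨fun _ _ _ => Set.mem_univ _, fun _ _ _ => Set.mem_univ _⟩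
  | succ m ih =>
    constructor
    · intro k s hs
      obtain ⟨μ, hΔ, hsupp, hrat⟩ := exists_cps2_of_mem_lambdaDSec1 hG ih.2 hs
      refine ⟨ih.1 k hs, μ, hΔ, fun h _ => ?_, hrat⟩
      rw [Set.indicator_eq_self.2 (hsupp h), (μ.hasSum_one h).tsum_eq]
    · intro k s hs
      obtain ⟨μ, hΔ, hsupp, hrat⟩ := exists_cps1_of_mem_lambdaDSec2 hG ih.1 hs
      refine ⟨ih.2 k hs, μ, hΔ, fun h _ => ?_, hrat⟩
      rw [Set.indicator_eq_self.2 (hsupp h), (μ.hasSum_one h).tsum_eq]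

end Procedures

theorem dch_subset_sigmaD_general {A B : Type*} (G : MSGame A B) (hG : G.WellFormed)
    (v1 v2 : List (A × B) → ℝ)
    (f : ℕ → ℝ) :
    (∀ k : ℕ, LambdaDSec1 G v1 v2 f k k ⊆ SigmaDSec1 G v1 v2 f k k) ∧
    (∀ k : ℕ, LambdaDSec2 G v1 v2 f k k ⊆ SigmaDSec2 G v1 v2 f k k) ∧
    (∀ k : ℕ, (⋂ n : ℕ, LambdaDSec1 G v1 v2 f n k) ⊆ ⋂ n : ℕ, SigmaDSec1 G v1 v2 f n k) ∧
    (∀ k : ℕ, (⋂ n : ℕ, LambdaDSec2 G v1 v2 f n k) ⊆ ⋂ n : ℕ, SigmaDSec2 G v1 v2 f n k) := by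
  have key := lambdaDSec_diag_subset_sigmaDSec (v1 := v1) (v2 := v2) (f := f) hG
  refine ⟨fun k => (key k).1 k, fun k => (key k).2 k, fun k => ?_, fun k => ?_⟩
  · exact (Set.iInter_subset _ k).trans (Set.subset_iInter fun n => (key n).1 k)
  · exact (Set.iInter_subset _ k).trans (Set.subset_iInter fun n => (key n).2 k)

/-- Theorem 2, part 1: `Λᵏ_{θ_{ik}} ⊆ Σᵏ_{θ_{ik}}` for each player i and
level k; consequently the DCH solution is contained in the set of dynamically
Δ^κ-rationalizable type-strategy pairs. -/
theorem dch_subset_sigmaD {A B : Type*} (G : MSGame A B) (hG : G.WellFormed)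
    (v1 v2 : List (A × B) → ℝ)
    (f : ℕ → ℝ) (hf : ∀ n, 0 < f n) (hfsum : HasSum f 1) :
    (∀ k : ℕ, LambdaDSec1 G v1 v2 f k k ⊆ SigmaDSec1 G v1 v2 f k k) ∧
    (∀ k : ℕ, LambdaDSec2 G v1 v2 f k k ⊆ SigmaDSec2 G v1 v2 f k k) ∧
    (∀ k : ℕ, (⋂ n : ℕ, LambdaDSec1 G v1 v2 f n k) ⊆ ⋂ n : ℕ, SigmaDSec1 G v1 v2 f n k) ∧
    (∀ k : ℕ, (⋂ n : ℕ, LambdaDSec2 G v1 v2 f n k) ⊆ ⋂ n : ℕ, SigmaDSec2 G v1 v2 f n k) :=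
  dch_subset_sigmaD_general G hG v1 v2 f
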